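/- Let ρ(x) = a x + b x³ + c x⁵ with a = 3.4445, b = −4.7750, c = 2.0315, and let ρ⁽⁵⁾ denote the 5-fold composition of ρ. There exists a universal constant γ > 0 such that for every x ∈ (0, 1], ρ⁽⁵⁾(x) ≥ γ x; equivalently, ρ⁽⁵⁾ decomposes on (0,1] into a linear core γ x plus a nonnegative residual. -/
import Mathlib


/-- The base Muon Newton–Schulz polynomial ρ(x) = a x + b x³ + c x⁵ with
a = 3.4445, b = −4.7750, c = 2.0315. -/
noncomputable def ρ (x : ℝ) : ℝ := 3.4445 * x + (-4.7750) * x ^ 3 + 2.0315 * x ^ 5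

lemma rho_step (x : ℝ) (hx : 0 < x) (hx1 : x ≤ 1.21) :
    0.6 * x ≤ ρ x ∧ 0 < ρ x ∧ ρ x ≤ 1.21 := by
  have hq : 2.0315 * x ^ 4 - 4.775 * x ^ 2 + 2.8445 ≥ 0 := by
    nlinarith [sq_nonneg (x ^ 2 - 1.1753)]
  have h1 : 0.6 * x ≤ ρ x := by
    unfold ρ; nlinarith [mul_pos hx hx]
  refine ⟨h1, lt_of_lt_of_le (by positivity) h1, ?_⟩
  unfold ρ
  nlinarith [sq_nonneg (x - 0.5545), sq_nonneg (x ^ 2 - 0.3075), mul_pos hx hx,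
    mul_nonneg (mul_nonneg hx.le hx.le) hx.le, sq_nonneg (x * (x - 0.5545)),
    mul_nonneg (sub_nonneg.2 hx1) hx.le, mul_nonneg (sub_nonneg.2 hx1) (sq_nonneg x),
    mul_nonneg (mul_nonneg (sub_nonneg.2 hx1) (sub_nonneg.2 hx1)) hx.le]

/-- There exists a universal constant γ > 0 such that for every x ∈ (0, 1],
ρ⁽⁵⁾(x) ≥ γ x: the composed fifth iterate decomposes on (0,1] into a linear core γ x
plus a nonnegative residual. -/
theorem stmt_9 : ∃ γ : ℝ, 0 < γ ∧ ∀ x ∈ Set.Ioc (0 : ℝ) 1, γ * x ≤ ρ^[5] x := by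
  refine ⟨0.6 ^ 5, by norm_num, ?_⟩
  rintro x ⟨hx, hx1⟩
  have h0 := rho_step x hx (by linarith)
  have h1 := rho_step _ h0.2.1 h0.2.2
  have h2 := rho_step _ h1.2.1 h1.2.2
  have h3 := rho_step _ h2.2.1 h2.2.2
  have h4 := rho_step _ h3.2.1 h3.2.2
  have : ρ^[5] x = ρ (ρ (ρ (ρ (ρ x)))) := by
    simp [Function.iterate_succ_apply, Function.iterate_zero_apply]
  rw [this]
  nlinarith [h0.1, h1.1, h2.1, h3.1, h4.1, h0.2.1.le, h1.2.1.le, h2.2.1.le, h3.2.1.le]
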